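/- Let F : ℝ → ℂ be measurable with ∫ x²|F(x)| dx < ∞, ∫ F(x) dx = 1, ∫ x·F(x) dx = 0, and set ν = 2∫ x²·F(x) dx with ν real and positive. Define f(t) = ∫ e^{itx} F(x) dx and assume |f(t)| ≤ 1 for all t ∈ ℝ. Then for each t ∈ ℝ, f(t/√N)^N → exp(−ν t²/4) as N → ∞. -/

import Mathlib

/-!
Let `f s = ∫ exp (i s x) F x dx`. Since `|exp (i y) - 1 - i y + y² / 2| ≤ 4 y²` and `x² |F x|` is
integrable, dominated convergence turns the pointwise expansion of `exp (i s x)` to second order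
into `f s = ∫ F + i s ∫ x F - s² / 2 ∫ x² F + o(s²) = 1 - ν s² / 4 + o(s²)` as `s → 0`.
Hence `f (t / √N) = 1 - ν t² / (4 N) + o(1 / N)`, and `(1 + a / N + o(1 / N)) ^ N → exp a`.
-/

open MeasureTheory Filter Topology

open Complex Asymptotics

lemma norm_exp_sub_taylor_two_le (w : ℂ) :
    ‖exp w - (1 + w + w ^ 2 / 2)‖ ≤ ‖w‖ ^ 3 * Real.exp ‖w‖ := by
  simpa [Finset.sum_range_succ, add_assoc] using norm_exp_sub_sum_le_norm_mul_exp w 3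

lemma norm_exp_I_mul_sub_taylor_two_le (y : ℝ) :
    ‖exp (I * y) - (1 + I * y + (I * y) ^ 2 / 2)‖ ≤ 4 * y ^ 2 := by
  have hIy : ‖I * (y : ℂ)‖ = |y| := by simp
  rcases le_or_gt |y| 1 with hy | hy
  · calc _ ≤ |y| ^ 3 * Real.exp |y| := hIy ▸ norm_exp_sub_taylor_two_le _
      _ ≤ |y| ^ 2 * Real.exp 1 :=
          mul_le_mul (pow_le_pow_of_le_one (abs_nonneg y) hy (by norm_num))
            (Real.exp_le_exp.2 hy) (by positivity) (by positivity)
      _ ≤ 4 * y ^ 2 := by nlinarith [Real.exp_one_lt_d9, sq_abs y, sq_nonneg y]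
  · calc _ ≤ ‖exp (I * y)‖ + (‖(1 : ℂ)‖ + ‖I * (y : ℂ)‖ + ‖(I * y) ^ 2 / 2‖) :=
          (norm_sub_le _ _).trans (add_le_add_right (norm_add₃_le ..) _)
      _ = 1 + (1 + |y| + y ^ 2 / 2) := by
          rw [norm_exp_I_mul_ofReal, norm_div, norm_pow, hIy, sq_abs]; norm_num
      _ ≤ 4 * y ^ 2 := by nlinarith [sq_abs y]

variable {μ : Measure ℝ}

lemma isLittleO_integral_exp_I_mul_taylor_remainder {F : ℝ → ℂ} (hF : AEStronglyMeasurable F μ)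
    (h2 : Integrable (fun x => x ^ 2 * ‖F x‖) μ) :
    (fun s : ℝ => ∫ x, (exp (I * s * x) - (1 + I * s * x + (I * s * x) ^ 2 / 2)) * F x ∂μ)
      =o[𝓝 0] fun s => (s : ℂ) ^ 2 := by
  set r : ℝ → ℝ → ℂ := fun s x =>
    (exp (I * s * x) - (1 + I * s * x + (I * s * x) ^ 2 / 2)) / (s : ℂ) ^ 2 * F x
  have hsx (s x : ℝ) : I * s * x = I * ((s * x : ℝ) : ℂ) := by push_cast; ring
  have hr_meas (s : ℝ) : AEStronglyMeasurable (r s) μ :=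
    (Continuous.aestronglyMeasurable (by fun_prop)).mul hF
  have hr_bound (s x : ℝ) : ‖r s x‖ ≤ 4 * (x ^ 2 * ‖F x‖) := by
    rcases eq_or_ne s 0 with rfl | hs
    · simp only [r, ofReal_zero, ne_eq, two_ne_zero, not_false_eq_true, zero_pow, div_zero,
        zero_mul, norm_zero]
      positivity
    rw [norm_mul, norm_div, norm_pow, norm_real, Real.norm_eq_abs, sq_abs, ← mul_assoc]
    gcongr
    rw [div_le_iff₀ (by positivity), hsx]
    linarith [norm_exp_I_mul_sub_taylor_two_le (s * x)]
  have hr_small (s x : ℝ) : ‖r s x‖ ≤ |s| * (|x| ^ 3 * Real.exp (|s| * |x|) * ‖F x‖) := by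
    rcases eq_or_ne s 0 with rfl | hs
    · simp [r]
    have hIsx : ‖I * s * x‖ = |s| * |x| := by simp
    rw [norm_mul, norm_div, norm_pow, norm_real, Real.norm_eq_abs, ← mul_assoc, ← mul_assoc]
    gcongr
    rw [div_le_iff₀ (by positivity)]
    calc _ ≤ ‖I * s * x‖ ^ 3 * Real.exp ‖I * s * x‖ := norm_exp_sub_taylor_two_le _
      _ = _ := by rw [hIsx]; ring
  have hr_lim (x : ℝ) : Tendsto (fun s => r s x) (𝓝 0) (𝓝 0) := by
    refine squeeze_zero_norm (hr_small · x) ?_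
    simpa using ((by fun_prop : Continuous fun s : ℝ =>
      |s| * (|x| ^ 3 * Real.exp (|s| * |x|) * ‖F x‖)).tendsto 0)
  rw [isLittleO_iff_tendsto' (Eventually.of_forall fun s hs => by simp_all)]
  have := tendsto_integral_filter_of_dominated_convergence _ (Eventually.of_forall hr_meas)
    (Eventually.of_forall fun s => ae_of_all _ (hr_bound s)) (h2.const_mul 4)
    (ae_of_all _ hr_lim)
  simpa [r, integral_div, div_mul_eq_mul_div] using this

lemma integrable_ofReal_mul {F : ℝ → ℂ} (hF : Integrable F μ)
    (h2 : Integrable (fun x => x ^ 2 * ‖F x‖) μ) : Integrable (fun x : ℝ => (x : ℂ) * F x) μ := by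
  refine (hF.norm.add h2).mono' (continuous_ofReal.aestronglyMeasurable.mul hF.1)
    (ae_of_all _ fun x => ?_)
  have hx : |x| ≤ 1 + x ^ 2 := by nlinarith [sq_abs x, sq_nonneg (|x| - 1)]
  rw [Pi.add_apply, norm_mul, norm_real, Real.norm_eq_abs]
  nlinarith [mul_le_mul_of_nonneg_right hx (norm_nonneg (F x))]

lemma integrable_ofReal_sq_mul {F : ℝ → ℂ} (hF : AEStronglyMeasurable F μ)
    (h2 : Integrable (fun x => x ^ 2 * ‖F x‖) μ) : Integrable (fun x : ℝ => (x : ℂ) ^ 2 * F x) μ :=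
  (integrable_norm_iff ((continuous_ofReal.pow 2).aestronglyMeasurable.mul hF)).1 <|
    h2.congr (ae_of_all _ fun x => by simp)

theorem isLittleO_integral_exp_I_mul_sub_taylor_two {F : ℝ → ℂ} (hF : Integrable F μ)
    (h2 : Integrable (fun x => x ^ 2 * ‖F x‖) μ) :
    (fun s : ℝ => (∫ x : ℝ, exp (I * s * x) * F x ∂μ) - (∫ x, F x ∂μ + I * s * ∫ x, (x : ℂ) * F x ∂μ
      + (I * s) ^ 2 / 2 * ∫ x, (x : ℂ) ^ 2 * F x ∂μ)) =o[𝓝 0] fun s => (s : ℂ) ^ 2 := by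
  refine (isLittleO_integral_exp_I_mul_taylor_remainder hF.1 h2).congr_left fun s => ?_
  have hexp : Integrable (fun x : ℝ => exp (I * s * x) * F x) μ :=
    hF.bdd_mul (c := 1) (Continuous.aestronglyMeasurable (by fun_prop))
      (ae_of_all _ fun x => by rw [norm_exp]; simp)
  have hx : Integrable (fun x : ℝ => I * s * (x * F x)) μ :=
    (integrable_ofReal_mul hF h2).const_mul _
  have hx2 : Integrable (fun x : ℝ => (I * s) ^ 2 / 2 * ((x : ℂ) ^ 2 * F x)) μ :=
    (integrable_ofReal_sq_mul hF.1 h2).const_mul _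
  have h1 : Integrable (fun x : ℝ => F x + I * s * (x * F x)) μ := hF.add hx
  have h12 : Integrable (fun x : ℝ => F x + I * s * (x * F x)
      + (I * s) ^ 2 / 2 * ((x : ℂ) ^ 2 * F x)) μ := h1.add hx2
  calc _ = ∫ x : ℝ, exp (I * s * x) * F x - (F x + I * s * (x * F x)
          + (I * s) ^ 2 / 2 * ((x : ℂ) ^ 2 * F x)) ∂μ := by
        congr 1; ext x; ring
    _ = _ := by
        rw [integral_sub hexp h12, integral_add h1 hx2, integral_add hF hx, integral_const_mul,
          integral_const_mul]

theorem clt_for_complex_densities_general (F : ℝ → ℂ) (ν : ℝ)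
    (hF : Integrable F)
    (h2abs : Integrable (fun x : ℝ => x ^ 2 * ‖F x‖))
    (hnorm : ∫ x : ℝ, F x = 1)
    (hfirst : ∫ x : ℝ, (x : ℂ) * F x = 0)
    (hν2 : (2 * ∫ x : ℝ, (x : ℂ) ^ 2 * F x) = (ν : ℂ))
    (t : ℝ) :
    Tendsto
      (fun N : ℕ =>
        (∫ x : ℝ, Complex.exp (Complex.I * (t / Real.sqrt N) * x) * F x) ^ N)
      atTop (𝓝 (Complex.exp (-(ν : ℂ) * (t:ℂ)^2 / 4))) := by
  have hf : (fun s : ℝ => (∫ x : ℝ, exp (I * s * x) * F x) - (1 - ν / 4 * (s : ℂ) ^ 2))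
      =o[𝓝 0] fun s => (s : ℂ) ^ 2 := by
    refine (isLittleO_integral_exp_I_mul_sub_taylor_two hF h2abs).congr_left fun s => ?_
    rw [hnorm, hfirst, ← hν2, mul_pow, I_sq]
    ring
  have hs : Tendsto (fun N : ℕ => t / √N) atTop (𝓝 0) :=
    tendsto_const_nhds.div_atTop (Real.tendsto_sqrt_atTop.comp tendsto_natCast_atTop_atTop)
  have hs_sq (N : ℕ) : ((t / √N : ℝ) : ℂ) ^ 2 = t ^ 2 * (1 / N) := by
    rw [← ofReal_pow, div_pow, Real.sq_sqrt N.cast_nonneg]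
    push_cast
    ring
  apply tendsto_pow_exp_of_isLittleO_sub_add_div
  refine ((hf.comp_tendsto hs).trans_isBigO ?_).congr' ?_ .rfl
  · simp only [Function.comp_def, hs_sq]
    exact (isBigO_refl _ _).const_mul_left _
  · filter_upwards with N
    simp only [Function.comp_apply, hs_sq]
    push_cast
    ring

theorem clt_for_complex_densities (F : ℝ → ℂ) (ν : ℝ)
    (hmeas : Measurable F)
    (hF : Integrable F)
    (h2abs : Integrable (fun x : ℝ => x ^ 2 * ‖F x‖))
    (hnorm : ∫ x : ℝ, F x = 1)
    (hfirst : ∫ x : ℝ, (x : ℂ) * F x = 0)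
    (hν : 0 < ν)
    (hν2 : (2 * ∫ x : ℝ, (x : ℂ) ^ 2 * F x) = (ν : ℂ))
    (hfb : ∀ t : ℝ,
      ‖∫ x : ℝ, Complex.exp (Complex.I * t * x) * F x‖ ≤ 1)
    (t : ℝ) :
    Tendsto
      (fun N : ℕ =>
        (∫ x : ℝ, Complex.exp (Complex.I * (t / Real.sqrt N) * x) * F x) ^ N)
      atTop (𝓝 (Complex.exp (-(ν : ℂ) * (t:ℂ)^2 / 4))) :=
  clt_for_complex_densities_general F ν hF h2abs hnorm hfirst hν2 t
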